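/- arXiv:0903.1062 — 2 statements merged into one kernel-verified Lean document; each statement's English description precedes it below -/
import Mathlib

section
/- For every integer k and every finite product P = x⁻(m₁)x⁻(m₂)⋯x⁻(m_r) in U_q (m_i ∈ ℤ, r ≥ 0), the commutator [x⁺(k), P] = x⁺(k)P − Px⁺(k) lies in the F-linear span of the elements a(r₁)⋯a(r_j)·Kᵃ·Q and a(−r₁)⋯a(−r_j)·Kᵇ·R, where j ≥ 0, r₁,…,r_j are positive integers, a, b ∈ ℤ, and Q, R range over the subalgebra of U_q generated by {x⁻(n) : n ∈ ℤ} ∪ {γ^{1/2}, γ^{−1/2}}. -/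
noncomputable section

/-- `F = ℚ(s)`, the field of rational functions over `ℚ` in the indeterminate `s`. -/
abbrev F : Type := RatFunc ℚ

/-- `q = s²`, so that `q^{1/2} = s ∈ F`. -/
def q : F := RatFunc.X ^ 2

/-- The quantum integer `[n] = (qⁿ - q⁻ⁿ)/(q - q⁻¹)`. -/
def qint (n : ℤ) : F := (q ^ n - q ^ (-n)) / (q - q⁻¹)

/-- Generators of `U_q(ŝl₂)` in the Drinfeld realization. -/
inductive UGen : Type
  | xp : ℤ → UGen
  | xm : ℤ → UGen
  | a : (l : ℤ) → l ≠ 0 → UGen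
  | K : UGen
  | Kinv : UGen
  | D : UGen
  | Dinv : UGen
  | gh : UGen
  | ghi : UGen

/-- The free `F`-algebra on the generators. -/
abbrev UFA := FreeAlgebra F UGen

/-- `x⁺(k)` in the free algebra. -/
def xpF (k : ℤ) : UFA := FreeAlgebra.ι F (UGen.xp k)
/-- `x⁻(k)` in the free algebra. -/
def xmF (k : ℤ) : UFA := FreeAlgebra.ι F (UGen.xm k)
/-- `a(l)` in the free algebra (by convention `0` if `l = 0`). -/
def aF (l : ℤ) : UFA := if h : l ≠ 0 then FreeAlgebra.ι F (UGen.a l h) else 0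
/-- `K` in the free algebra. -/
def KF : UFA := FreeAlgebra.ι F UGen.K
/-- `K⁻¹` in the free algebra. -/
def KinvF : UFA := FreeAlgebra.ι F UGen.Kinv
/-- `D` in the free algebra. -/
def DF : UFA := FreeAlgebra.ι F UGen.D
/-- `D⁻¹` in the free algebra. -/
def DinvF : UFA := FreeAlgebra.ι F UGen.Dinv
/-- `γ^{1/2}` in the free algebra. -/
def ghF : UFA := FreeAlgebra.ι F UGen.gh
/-- `γ^{-1/2}` in the free algebra. -/
def ghiF : UFA := FreeAlgebra.ι F UGen.ghi

/-- `(γ^{1/2})ᵐ` for `m ∈ ℤ` in the free algebra. -/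
def ghPowF (m : ℤ) : UFA := if 0 ≤ m then ghF ^ m.toNat else ghiF ^ (-m).toNat

/-- `γᵐ = ((γ^{1/2})²)ᵐ` for `m ∈ ℤ` in the free algebra. -/
def gaPowF (m : ℤ) : UFA :=
  if 0 ≤ m then (ghF * ghF) ^ m.toNat else (ghiF * ghiF) ^ (-m).toNat

/-- `ψ(m)`: `ψ(m) = 0` for `m < 0`, `ψ(0) = K`, and for `m > 0`
`ψ(m) = K·∑_{j=1}^{m} ((q−q⁻¹)ʲ/j!)·∑_{k₁+⋯+k_j=m, kᵢ≥1} a(k₁)⋯a(k_j)`.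
(Tuples with a zero entry contribute `0` since `aF 0 = 0`.) -/
def psiF (m : ℤ) : UFA :=
  if m < 0 then 0
  else if m = 0 then KF
  else KF * ∑ j ∈ Finset.Icc 1 m.toNat,
    ((q - q⁻¹) ^ j / (j.factorial : F)) •
      ∑ k ∈ Finset.Nat.antidiagonalTuple j m.toNat,
        (List.ofFn fun i => aF ((k i : ℤ))).prod

/-- `φ(m)`: `φ(m) = 0` for `m > 0`, `φ(0) = K⁻¹`, and for `m > 0`
`φ(−m) = K⁻¹·∑_{j=1}^{m} ((−(q−q⁻¹))ʲ/j!)·∑_{k₁+⋯+k_j=m, kᵢ≥1} a(−k₁)⋯a(−k_j)`. -/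
def phiF (m : ℤ) : UFA :=
  if 0 < m then 0
  else if m = 0 then KinvF
  else KinvF * ∑ j ∈ Finset.Icc 1 (-m).toNat,
    ((-(q - q⁻¹)) ^ j / (j.factorial : F)) •
      ∑ k ∈ Finset.Nat.antidiagonalTuple j (-m).toNat,
        (List.ofFn fun i => aF (-(k i : ℤ))).prod

/-- The defining relations of `U_q(ŝl₂)` in the Drinfeld realization. -/
inductive URel : UFA → UFA → Prop
  | KKinv : URel (KF * KinvF) 1
  | KinvK : URel (KinvF * KF) 1
  | DDinv : URel (DF * DinvF) 1
  | DinvD : URel (DinvF * DF) 1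
  /- `γ^{±1/2}` central, `γ^{1/2}γ^{-1/2} = 1` -/
  | central_gh (x : UGen) : URel (ghF * FreeAlgebra.ι F x) (FreeAlgebra.ι F x * ghF)
  | central_ghi (x : UGen) : URel (ghiF * FreeAlgebra.ι F x) (FreeAlgebra.ι F x * ghiF)
  | ghghi : URel (ghF * ghiF) 1
  | ghighF : URel (ghiF * ghF) 1
  /- `[a(k), a(l)] = δ_{k+l,0}·([2k]/k)·(γᵏ − γ⁻ᵏ)/(q − q⁻¹)` -/
  | aa (k l : ℤ) (hk : k ≠ 0) (hl : l ≠ 0) :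
      URel (aF k * aF l - aF l * aF k)
        (if k + l = 0 then
          (qint (2 * k) / (k : F)) • ((q - q⁻¹)⁻¹ • (gaPowF k - gaPowF (-k)))
         else 0)
  /- `[a(k), K] = 0`, `[D, K] = 0` -/
  | aK (k : ℤ) (hk : k ≠ 0) : URel (aF k * KF) (KF * aF k)
  | DK : URel (DF * KF) (KF * DF)
  /- `Da(k)D⁻¹ = qᵏa(k)` -/
  | DaDinv (k : ℤ) (hk : k ≠ 0) : URel (DF * aF k * DinvF) (q ^ k • aF k)
  /- `Dx^{±}(k)D⁻¹ = qᵏx^{±}(k)` -/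
  | DxpDinv (k : ℤ) : URel (DF * xpF k * DinvF) (q ^ k • xpF k)
  | DxmDinv (k : ℤ) : URel (DF * xmF k * DinvF) (q ^ k • xmF k)
  /- `Kx^{±}(k)K⁻¹ = q^{±2}x^{±}(k)` -/
  | KxpKinv (k : ℤ) : URel (KF * xpF k * KinvF) (q ^ 2 • xpF k)
  | KxmKinv (k : ℤ) : URel (KF * xmF k * KinvF) ((q ^ 2)⁻¹ • xmF k)
  /- `[a(k), x^{±}(l)] = ±([2k]/k)·(γ^{1/2})^{∓|k|}·x^{±}(k+l)` -/
  | axp (k l : ℤ) (hk : k ≠ 0) :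
      URel (aF k * xpF l - xpF l * aF k)
        ((qint (2 * k) / (k : F)) • (ghiF ^ k.natAbs * xpF (k + l)))
  | axm (k l : ℤ) (hk : k ≠ 0) :
      URel (aF k * xmF l - xmF l * aF k)
        (-((qint (2 * k) / (k : F)) • (ghF ^ k.natAbs * xmF (k + l))))
  /- `x^{±}(k+1)x^{±}(l) − q^{±2}x^{±}(l)x^{±}(k+1) = q^{±2}x^{±}(k)x^{±}(l+1) − x^{±}(l+1)x^{±}(k)` -/
  | serre_p (k l : ℤ) :
      URel (xpF (k + 1) * xpF l - q ^ 2 • (xpF l * xpF (k + 1)))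
        (q ^ 2 • (xpF k * xpF (l + 1)) - xpF (l + 1) * xpF k)
  | serre_m (k l : ℤ) :
      URel (xmF (k + 1) * xmF l - (q ^ 2)⁻¹ • (xmF l * xmF (k + 1)))
        ((q ^ 2)⁻¹ • (xmF k * xmF (l + 1)) - xmF (l + 1) * xmF k)
  /- `[x⁺(k), x⁻(l)] = ((γ^{1/2})^{k−l}ψ(k+l) − (γ^{1/2})^{l−k}φ(k+l))/(q − q⁻¹)` -/
  | xpxm (k l : ℤ) :
      URel (xpF k * xmF l - xmF l * xpF k)
        ((q - q⁻¹)⁻¹ • (ghPowF (k - l) * psiF (k + l) - ghPowF (l - k) * phiF (k + l)))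

/-- The quantum affine algebra `U_q = U_q(ŝl₂)` in the Drinfeld realization. -/
abbrev Uq := RingQuot URel

/-- `x⁺(k) ∈ U_q`. -/
def XP (k : ℤ) : Uq := RingQuot.mkAlgHom F URel (xpF k)
/-- `x⁻(k) ∈ U_q`. -/
def XM (k : ℤ) : Uq := RingQuot.mkAlgHom F URel (xmF k)
/-- `a(l) ∈ U_q`. -/
def AU (l : ℤ) : Uq := RingQuot.mkAlgHom F URel (aF l)
/-- `K ∈ U_q`. -/
def KU : Uq := RingQuot.mkAlgHom F URel KF
/-- `K⁻¹ ∈ U_q`. -/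
def KinvU : Uq := RingQuot.mkAlgHom F URel KinvF
/-- `D ∈ U_q`. -/
def DU : Uq := RingQuot.mkAlgHom F URel DF
/-- `D⁻¹ ∈ U_q`. -/
def DinvU : Uq := RingQuot.mkAlgHom F URel DinvF
/-- `γ^{1/2} ∈ U_q`. -/
def GhU : Uq := RingQuot.mkAlgHom F URel ghF
/-- `γ^{-1/2} ∈ U_q`. -/
def GhiU : Uq := RingQuot.mkAlgHom F URel ghiF

/-- The subalgebra of `U_q` generated by `{x⁻(n) : n ∈ ℤ} ∪ {γ^{1/2}, γ^{−1/2}}`. -/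
def Nsub : Subalgebra F Uq := Algebra.adjoin F (Set.range XM ∪ {GhU, GhiU})

/-- `Kᵃ ∈ U_q` for `a ∈ ℤ`. -/
def KPow (a : ℤ) : Uq := if 0 ≤ a then KU ^ a.toNat else KinvU ^ (-a).toNat

/-- The set of elements `a(r₁)⋯a(r_j)·Kᵃ·Q` and `a(−r₁)⋯a(−r_j)·Kᵇ·R` with
`j ≥ 0`, `r₁,…,r_j` positive integers, `a, b ∈ ℤ`, and `Q, R` in the subalgebra
generated by the `x⁻(n)` and `γ^{±1/2}`. -/
def SpanSet : Set Uq :=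
  {z | ∃ (j : ℕ) (r : Fin j → ℕ), (∀ i, 0 < r i) ∧
        ∃ (a : ℤ) (Q : Uq), Q ∈ Nsub ∧
          z = (List.ofFn fun i => AU ((r i : ℤ))).prod * KPow a * Q} ∪
  {z | ∃ (j : ℕ) (r : Fin j → ℕ), (∀ i, 0 < r i) ∧
        ∃ (b : ℤ) (R : Uq), R ∈ Nsub ∧
          z = (List.ofFn fun i => AU (-(r i : ℤ))).prod * KPow b * R}

/-! Expanding `[x⁺(k), x⁻(m)R] = [x⁺(k), x⁻(m)]R + x⁻(m)[x⁺(k), R]`, the first term is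
`ψ`/`φ` times an element of the `x⁻`-subalgebra, hence already of the required shape, since
`K^{±1}` commutes with the `a(l)` and `γ^{1/2}` is central. For the second term it suffices
that each half of the spanning set (positive or negative modes `a(ε r)`) spans a space stable
under left multiplication by `x⁻(m)`: the relation `x⁻(m)a(l) = a(l)x⁻(m) + c·γ^{|l|/2}x⁻(l+m)`
moves `x⁻(m)` through the `a`'s, and `x⁻(m)Kᵃ` is a scalar multiple of `Kᵃx⁻(m)`. -/

section SpanClosure

variable {R A : Type*} [CommSemiring R] [Semiring A] [Algebra R A] {S : Set A} {u z : A}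

theorem mul_mem_span_of_forall_mul_mem (h : ∀ s ∈ S, u * s ∈ Submodule.span R S)
    (hz : z ∈ Submodule.span R S) : u * z ∈ Submodule.span R S :=
  (Submodule.span_le (p := (Submodule.span R S).comap (LinearMap.mulLeft R u))).mpr h hz

theorem mul_mem_span_of_forall_mem_mul (h : ∀ s ∈ S, s * u ∈ Submodule.span R S)
    (hz : z ∈ Submodule.span R S) : z * u ∈ Submodule.span R S :=
  (Submodule.span_le (p := (Submodule.span R S).comap (LinearMap.mulRight R u))).mpr h hz

end SpanClosure

theorem mul_pow_eq_smul_pow_mul {R A : Type*} [CommSemiring R] [Semiring A] [Algebra R A]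
    {x y : A} {c : R} (h : x * y = c • (y * x)) (n : ℕ) : x * y ^ n = c ^ n • (y ^ n * x) := by
  induction n with
  | zero => simp
  | succ n ih =>
    rw [pow_succ, ← mul_assoc, ih, smul_mul_assoc, mul_assoc, h, mul_smul_comm, smul_smul,
      ← mul_assoc, pow_succ]

local notation "mkU" => RingQuot.mkAlgHom F URel

theorem commute_mkU_of_forall_rel {c : UFA}
    (h : ∀ x, URel (c * FreeAlgebra.ι F x) (FreeAlgebra.ι F x * c)) (u : Uq) :
    Commute (mkU c) u := by
  obtain ⟨w, rfl⟩ := RingQuot.mkAlgHom_surjective F URel u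
  induction w using FreeAlgebra.induction with
  | grade0 r => rw [AlgHom.commutes]; exact (Algebra.commutes r _).symm
  | grade1 x => simpa only [Commute, SemiconjBy, map_mul] using RingQuot.mkAlgHom_rel F (h x)
  | mul a b ha hb => rw [map_mul]; exact ha.mul_right hb
  | add a b ha hb => rw [map_add]; exact ha.add_right hb

theorem commute_GhU (u : Uq) : Commute GhU u :=
  commute_mkU_of_forall_rel URel.central_gh u

theorem commute_ghPowF (d : ℤ) (u : Uq) : Commute (mkU (ghPowF d)) u := by
  unfold ghPowF
  split_ifs
  · rw [map_pow]; exact (commute_GhU u).pow_left _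
  · rw [map_pow]; exact (commute_mkU_of_forall_rel URel.central_ghi u).pow_left _

theorem XM_mem_Nsub (m : ℤ) : XM m ∈ Nsub :=
  Algebra.subset_adjoin (Or.inl ⟨m, rfl⟩)

theorem GhU_mem_Nsub : GhU ∈ Nsub :=
  Algebra.subset_adjoin (Or.inr (Set.mem_insert _ _))

theorem GhiU_mem_Nsub : GhiU ∈ Nsub :=
  Algebra.subset_adjoin (Or.inr (Set.mem_insert_of_mem _ rfl))

theorem ghPowF_mem_Nsub (d : ℤ) : mkU (ghPowF d) ∈ Nsub := by
  unfold ghPowF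
  split_ifs
  · rw [map_pow]; exact pow_mem GhU_mem_Nsub _
  · rw [map_pow]; exact pow_mem GhiU_mem_Nsub _

theorem KU_mul_KinvU : KU * KinvU = 1 := by
  rw [KU, KinvU, ← map_mul, RingQuot.mkAlgHom_rel F URel.KKinv, map_one]

theorem KinvU_mul_KU : KinvU * KU = 1 := by
  rw [KinvU, KU, ← map_mul, RingQuot.mkAlgHom_rel F URel.KinvK, map_one]

theorem KU_mul_XM_mul_KinvU (m : ℤ) : KU * XM m * KinvU = (q ^ 2)⁻¹ • XM m := by
  have h := RingQuot.mkAlgHom_rel F (URel.KxmKinv m)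
  simp only [map_mul, map_smul] at h
  exact h

theorem XM_mul_KinvU (m : ℤ) : XM m * KinvU = (q ^ 2)⁻¹ • (KinvU * XM m) := by
  rw [← mul_smul_comm, ← KU_mul_XM_mul_KinvU, ← mul_assoc, ← mul_assoc, KinvU_mul_KU, one_mul]

theorem XM_mul_KU (m : ℤ) : XM m * KU = q ^ 2 • (KU * XM m) := by
  have hq : (q ^ 2 : F) ≠ 0 := pow_ne_zero 2 (pow_ne_zero 2 RatFunc.X_ne_zero)
  have h : KU * XM m = (q ^ 2)⁻¹ • (XM m * KU) := by
    rw [← smul_mul_assoc, ← KU_mul_XM_mul_KinvU, mul_assoc _ KinvU, KinvU_mul_KU, mul_one]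
  rw [h, smul_smul, mul_inv_cancel₀ hq, one_smul]

theorem XM_mul_KPow (m a : ℤ) : ∃ c : F, XM m * KPow a = c • (KPow a * XM m) := by
  unfold KPow
  split_ifs
  · exact ⟨_, mul_pow_eq_smul_pow_mul (XM_mul_KU m) _⟩
  · exact ⟨_, mul_pow_eq_smul_pow_mul (XM_mul_KinvU m) _⟩

theorem KPow_one : KPow 1 = KU := by
  norm_num [KPow]

theorem KPow_neg_one : KPow (-1) = KinvU := by
  norm_num [KPow]

theorem AU_zero : AU 0 = 0 := by
  simp [AU, aF]

theorem commute_KU_AU (n : ℤ) : Commute KU (AU n) := by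
  rcases eq_or_ne n 0 with rfl | hn
  · rw [AU_zero]; exact Commute.zero_right _
  · simpa only [Commute, SemiconjBy, KU, AU, map_mul] using
      (RingQuot.mkAlgHom_rel F (URel.aK n hn)).symm

theorem commute_KPow_AU (a n : ℤ) : Commute (KPow a) (AU n) := by
  unfold KPow
  split_ifs
  · exact (commute_KU_AU n).pow_left _
  · refine Commute.pow_left ?_ _
    calc KinvU * AU n = KinvU * (AU n * KU) * KinvU := by
          rw [mul_assoc, mul_assoc, KU_mul_KinvU, mul_one]
      _ = AU n * KinvU := by
          rw [← (commute_KU_AU n).eq, ← mul_assoc, KinvU_mul_KU, one_mul]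

theorem XM_mul_AU (n m : ℤ) :
    XM m * AU n = AU n * XM m + (qint (2 * n) / (n : F)) • (GhU ^ n.natAbs * XM (n + m)) := by
  rcases eq_or_ne n 0 with rfl | hn
  · simp [AU_zero]
  · have h := RingQuot.mkAlgHom_rel F (URel.axm n m hn)
    simp only [map_sub, map_mul, map_neg, map_smul, map_pow] at h
    change AU n * XM m - XM m * AU n = -(_ • (GhU ^ n.natAbs * XM (n + m))) at h
    rw [sub_eq_iff_eq_add'] at h
    rw [h]
    abel

theorem XP_mul_XM_sub (k m : ℤ) :
    XP k * XM m - XM m * XP k = (q - q⁻¹)⁻¹ •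
      (mkU (ghPowF (k - m)) * mkU (psiF (k + m)) - mkU (ghPowF (m - k)) * mkU (phiF (k + m))) := by
  have h := RingQuot.mkAlgHom_rel F (URel.xpxm k m)
  simp only [map_sub, map_mul, map_smul] at h
  exact h

def spanTerms (ε : ℤ) : Set Uq :=
  {z | ∃ (j : ℕ) (r : Fin j → ℕ), (∀ i, 0 < r i) ∧ ∃ (a : ℤ) (Q : Uq), Q ∈ Nsub ∧
    z = (List.ofFn fun i => AU (ε * r i)).prod * KPow a * Q}

theorem spanSet_eq_union : SpanSet = spanTerms 1 ∪ spanTerms (-1) := by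
  simp only [SpanSet, spanTerms, one_mul, neg_one_mul]

theorem span_spanTerms_le (ε : ℤ) (hε : ε = 1 ∨ ε = -1) :
    Submodule.span F (spanTerms ε) ≤ Submodule.span F SpanSet := by
  rw [spanSet_eq_union]
  rcases hε with rfl | rfl
  · exact Submodule.span_mono Set.subset_union_left
  · exact Submodule.span_mono Set.subset_union_right

section spanTerms

variable {ε : ℤ} {z : Uq}

theorem mul_mem_spanTerms (hz : z ∈ spanTerms ε) {u : Uq} (hu : u ∈ Nsub) :
    z * u ∈ spanTerms ε := by
  obtain ⟨j, r, hr, a, Q, hQ, rfl⟩ := hz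
  exact ⟨j, r, hr, a, Q * u, mul_mem hQ hu, by rw [mul_assoc]⟩

theorem AU_mul_mem_spanTerms {n : ℕ} (hn : 0 < n) (hz : z ∈ spanTerms ε) :
    AU (ε * n) * z ∈ spanTerms ε := by
  obtain ⟨j, r, hr, a, Q, hQ, rfl⟩ := hz
  refine ⟨j + 1, Fin.cons n r, Fin.cases hn hr, a, Q, hQ, ?_⟩
  simp only [List.ofFn_succ, Fin.cons_zero, Fin.cons_succ, List.prod_cons, mul_assoc]

theorem KPow_mul_aMonomial_mul_mem (a : ℤ) {j : ℕ} (r : Fin j → ℕ) {Q : Uq} (hQ : Q ∈ Nsub) :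
    KPow a * (List.ofFn fun i => AU (ε * r i)).prod * Q ∈ Submodule.span F (spanTerms ε) := by
  by_cases hr : ∀ i, 0 < r i
  · have hcomm : Commute (KPow a) (List.ofFn fun i => AU (ε * r i)).prod :=
      Commute.list_prod_right _ _ fun x hx => by
        obtain ⟨i, rfl⟩ := List.mem_ofFn.mp hx
        exact commute_KPow_AU a _
    rw [hcomm.eq]
    exact Submodule.subset_span ⟨j, r, hr, a, Q, hQ, rfl⟩
  · obtain ⟨i, hi⟩ : ∃ i, r i = 0 := by
      simpa only [not_forall, Nat.pos_iff_ne_zero, not_not] using hr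
    rw [List.prod_eq_zero (List.mem_ofFn.mpr ⟨i, by simp [hi, AU_zero]⟩), mul_zero, zero_mul]
    exact zero_mem _

theorem XM_mul_mem_span_spanTerms (m : ℤ) (hz : z ∈ spanTerms ε) :
    XM m * z ∈ Submodule.span F (spanTerms ε) := by
  obtain ⟨j, r, hr, a, Q, hQ, rfl⟩ := hz
  induction j generalizing m with
  | zero =>
    obtain ⟨c, hc⟩ := XM_mul_KPow m a
    rw [List.ofFn_zero, List.prod_nil, one_mul, ← mul_assoc, hc, smul_mul_assoc, mul_assoc]
    exact Submodule.smul_mem _ _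
      (Submodule.subset_span ⟨0, r, hr, a, XM m * Q, mul_mem (XM_mem_Nsub m) hQ, by simp⟩)
  | succ j ih =>
    set rest := (List.ofFn fun i => AU (ε * r i.succ)).prod * KPow a * Q
    have ih' (m' : ℤ) := ih m' (fun i => r i.succ) (fun i => hr i.succ)
    have hsplit : XM m * ((List.ofFn fun i => AU (ε * r i)).prod * KPow a * Q) =
        AU (ε * r 0) * (XM m * rest) +
          (qint (2 * (ε * r 0)) / ((ε * r 0 : ℤ) : F)) •
            (XM (ε * r 0 + m) * rest * GhU ^ (ε * r 0).natAbs) := by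
      have hprod : (List.ofFn fun i => AU (ε * r i)).prod * KPow a * Q = AU (ε * r 0) * rest := by
        simp only [rest, List.ofFn_succ, List.prod_cons, mul_assoc]
      rw [hprod, ← mul_assoc, XM_mul_AU, add_mul, mul_assoc, smul_mul_assoc, mul_assoc,
        ((commute_GhU _).pow_left _).eq]
    rw [hsplit]
    refine add_mem ?_ (Submodule.smul_mem _ _ ?_)
    · exact mul_mem_span_of_forall_mul_mem
        (fun s hs => Submodule.subset_span (AU_mul_mem_spanTerms (hr 0) hs)) (ih' m)
    · exact mul_mem_span_of_forall_mem_mul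
        (fun s hs => Submodule.subset_span (mul_mem_spanTerms hs (pow_mem GhU_mem_Nsub _)))
        (ih' _)

end spanTerms

theorem XM_mul_mem_span_spanSet (m : ℤ) {z : Uq} (hz : z ∈ Submodule.span F SpanSet) :
    XM m * z ∈ Submodule.span F SpanSet := by
  refine mul_mem_span_of_forall_mul_mem (fun s hs => ?_) hz
  rw [spanSet_eq_union] at hs
  rcases hs with hs | hs
  · exact span_spanTerms_le 1 (Or.inl rfl) (XM_mul_mem_span_spanTerms m hs)
  · exact span_spanTerms_le (-1) (Or.inr rfl) (XM_mul_mem_span_spanTerms m hs)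

theorem psiF_mul_mem (n : ℤ) {Q : Uq} (hQ : Q ∈ Nsub) :
    mkU (psiF n) * Q ∈ Submodule.span F (spanTerms 1) := by
  have hK (j : ℕ) (r : Fin j → ℕ) := KPow_mul_aMonomial_mul_mem (ε := 1) 1 r hQ
  simp only [KPow_one, one_mul] at hK
  unfold psiF
  split_ifs
  · rw [map_zero, zero_mul]; exact zero_mem _
  · exact (by simpa only [List.ofFn_zero, List.prod_nil, mul_one] using hK 0 Fin.elim0 :
      KU * Q ∈ _)
  · simp only [map_mul, map_sum, map_smul, map_list_prod, List.map_ofFn, Finset.mul_sum,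
      Finset.sum_mul, mul_smul_comm, smul_mul_assoc]
    exact Submodule.sum_mem _ fun j _ => Submodule.smul_mem _ _ <|
      Submodule.sum_mem _ fun r _ => hK j r

theorem phiF_mul_mem (n : ℤ) {Q : Uq} (hQ : Q ∈ Nsub) :
    mkU (phiF n) * Q ∈ Submodule.span F (spanTerms (-1)) := by
  have hK (j : ℕ) (r : Fin j → ℕ) := KPow_mul_aMonomial_mul_mem (ε := -1) (-1) r hQ
  simp only [KPow_neg_one, neg_one_mul] at hK
  unfold phiF
  split_ifs
  · rw [map_zero, zero_mul]; exact zero_mem _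
  · exact (by simpa only [List.ofFn_zero, List.prod_nil, mul_one] using hK 0 Fin.elim0 :
      KinvU * Q ∈ _)
  · simp only [map_mul, map_sum, map_smul, map_list_prod, List.map_ofFn, Finset.mul_sum,
      Finset.sum_mul, mul_smul_comm, smul_mul_assoc]
    exact Submodule.sum_mem _ fun j _ => Submodule.smul_mem _ _ <|
      Submodule.sum_mem _ fun r _ => hK j r

theorem XP_mul_XM_sub_mul_mem (k m : ℤ) {R : Uq} (hR : R ∈ Nsub) :
    (XP k * XM m - XM m * XP k) * R ∈ Submodule.span F SpanSet := by
  rw [XP_mul_XM_sub, smul_mul_assoc, sub_mul]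
  refine Submodule.smul_mem _ _ (sub_mem ?_ ?_)
  · rw [(commute_ghPowF _ _).eq, mul_assoc]
    exact span_spanTerms_le 1 (Or.inl rfl) (psiF_mul_mem _ (mul_mem (ghPowF_mem_Nsub _) hR))
  · rw [(commute_ghPowF _ _).eq, mul_assoc]
    exact span_spanTerms_le (-1) (Or.inr rfl) (phiF_mul_mem _ (mul_mem (ghPowF_mem_Nsub _) hR))

/-- For every `k ∈ ℤ` and every finite product `P = x⁻(m₁)⋯x⁻(m_r)`,
the commutator `[x⁺(k), P]` lies in the `F`-linear span of `SpanSet`. -/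
theorem stmt12 (k : ℤ) (ms : List ℤ) :
    XP k * (ms.map XM).prod - (ms.map XM).prod * XP k ∈ Submodule.span F SpanSet := by
  induction ms with
  | nil => simp
  | cons m ms ih =>
    have hR : (ms.map XM).prod ∈ Nsub :=
      Subalgebra.list_prod_mem _ fun x hx => by
        obtain ⟨m', -, rfl⟩ := List.mem_map.mp hx
        exact XM_mem_Nsub m'
    have hleibniz (x y R : Uq) :
        x * (y * R) - y * R * x = (x * y - y * x) * R + y * (x * R - R * x) := by
      simp only [mul_sub, sub_mul, mul_assoc]; abel
    rw [List.map_cons, List.prod_cons, hleibniz]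
    exact add_mem (XP_mul_XM_sub_mul_mem k m hR) (XM_mul_mem_span_spanSet m ih)
end
end

section
/- Assume h = 0 (any d ∈ ℤ), let J be the left ideal of U_q generated by {x⁺(k) : k ∈ ℤ} ∪ {a(l) : l ≠ 0} ∪ {K − 1, K⁻¹ − 1, D − qᵈ·1, D⁻¹ − q⁻ᵈ·1, γ^{1/2} − 1, γ^{−1/2} − 1}, let M̃ = U_q/J and let 1̄ ∈ M̃ denote the image of 1. Then for all integers s and m, x⁺(s)·(x⁻(m)·1̄) = 0 in M̃. (Hence any nonzero vector of the form x⁻(m)·1̄ generates a proper submodule of M̃.) -/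
noncomputable section

/-- The left ideal `J` of `U_q` generated by the `x⁺(k)`, the `a(l)` (`l ≠ 0`),
`K − qʰ·1`, `K⁻¹ − q⁻ʰ·1`, `D − qᵈ·1`, `D⁻¹ − q⁻ᵈ·1`, `γ^{1/2} − 1`, `γ^{−1/2} − 1`. -/
def Jid (h d : ℤ) : Submodule Uq Uq :=
  Submodule.span Uq
    (Set.range XP ∪ {z | ∃ l : ℤ, l ≠ 0 ∧ z = AU l} ∪
      {KU - algebraMap F Uq (q ^ h), KinvU - algebraMap F Uq (q ^ (-h)),
       DU - algebraMap F Uq (q ^ d), DinvU - algebraMap F Uq (q ^ (-d)),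
       GhU - 1, GhiU - 1})

/-!
Commute `x⁺(s)` past `x⁻(m)`: since `x⁺(s)` kills `1̄`, what is left is the Cartan current
`(γ^{1/2})^{s-m} ψ(s+m) - (γ^{1/2})^{m-s} φ(s+m)` applied to `1̄`. For `s + m ≠ 0` this
current is `K^{±1}` times a combination of monomials ending in some `a(l)`, which kill `1̄`;
for `s + m = 0` it is `(γ^{1/2})^{s-m} K - (γ^{1/2})^{m-s} K⁻¹`, and all four factors act
on `1̄` as `1` when `h = 0`.
-/

section LeftIdeal

variable {R : Type*} [Ring R] (I : Submodule R R)

theorem Submodule.mul_sub_one_mem {g h : R} (hg : g - 1 ∈ I) (hh : h - 1 ∈ I) :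
    g * h - 1 ∈ I := by
  have hsplit : g * h - 1 = g * (h - 1) + (g - 1) := by noncomm_ring
  rw [hsplit]
  exact add_mem (I.smul_mem g hh) hg

theorem Submodule.pow_sub_one_mem {g : R} (hg : g - 1 ∈ I) (n : ℕ) : g ^ n - 1 ∈ I := by
  induction n with
  | zero => simp
  | succ n ih => rw [pow_succ]; exact I.mul_sub_one_mem ih hg

theorem Submodule.ofFn_prod_mem_of_last_mem {n : ℕ} (f : Fin (n + 1) → R)
    (hf : f (Fin.last n) ∈ I) :
    (List.ofFn f).prod ∈ I := by
  rw [List.ofFn_succ', List.concat_eq_append, List.prod_append, List.prod_singleton]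
  exact I.smul_mem _ hf

end LeftIdeal

local notation "π" => RingQuot.mkAlgHom F URel

section HighestWeight

variable (d : ℤ)

theorem XP_mem_Jid (k : ℤ) : XP k ∈ Jid 0 d :=
  Submodule.subset_span (Or.inl (Or.inl ⟨k, rfl⟩))

theorem AU_mem_Jid (l : ℤ) : AU l ∈ Jid 0 d := by
  rcases eq_or_ne l 0 with rfl | hl
  · simp [AU, aF]
  · exact Submodule.subset_span (Or.inl (Or.inr ⟨l, hl, rfl⟩))

theorem KU_sub_one_mem_Jid : KU - 1 ∈ Jid 0 d :=
  Submodule.subset_span (Or.inr (by simp))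

theorem KinvU_sub_one_mem_Jid : KinvU - 1 ∈ Jid 0 d :=
  Submodule.subset_span (Or.inr (by simp))

theorem ghPowF_sub_one_mem_Jid (m : ℤ) : π (ghPowF m) - 1 ∈ Jid 0 d := by
  have hgh : GhU - 1 ∈ Jid 0 d := Submodule.subset_span (Or.inr (by simp))
  have hghi : GhiU - 1 ∈ Jid 0 d := Submodule.subset_span (Or.inr (by simp))
  unfold ghPowF
  split_ifs
  · rw [map_pow]; exact (Jid 0 d).pow_sub_one_mem hgh _
  · rw [map_pow]; exact (Jid 0 d).pow_sub_one_mem hghi _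

/-- The common shape of `ψ(n)` and `φ(-n)` for `n > 0`; as `j ≥ 1`, every monomial ends
in an `a(l)`. -/
theorem map_mul_sum_prod_aF_mem_Jid (g : UFA) (n : ℕ) (c : ℕ → F) (e : ℕ → ℤ) :
    π (g * ∑ j ∈ Finset.Icc 1 n, c j •
      ∑ k ∈ Finset.Nat.antidiagonalTuple j n, (List.ofFn fun i => aF (e (k i))).prod) ∈
      Jid 0 d := by
  rw [map_mul, map_sum]
  refine (Jid 0 d).smul_mem _ (Submodule.sum_mem _ fun j hj => ?_)
  obtain ⟨j, rfl⟩ :=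
    Nat.exists_eq_add_one_of_ne_zero (Nat.one_le_iff_ne_zero.mp (Finset.mem_Icc.mp hj).1)
  rw [map_smul, map_sum]
  refine Submodule.smul_of_tower_mem _ _ (Submodule.sum_mem _ fun k _ => ?_)
  rw [map_list_prod, List.map_ofFn]
  exact (Jid 0 d).ofFn_prod_mem_of_last_mem _ (AU_mem_Jid d _)

theorem psiF_mem_Jid {n : ℤ} (hn : 0 < n) : π (psiF n) ∈ Jid 0 d := by
  unfold psiF
  rw [if_neg (by omega), if_neg (by omega)]
  exact map_mul_sum_prod_aF_mem_Jid d KF n.toNat _ fun k => (k : ℤ)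

theorem phiF_mem_Jid {n : ℤ} (hn : n < 0) : π (phiF n) ∈ Jid 0 d := by
  unfold phiF
  rw [if_neg (by omega), if_neg (by omega)]
  exact map_mul_sum_prod_aF_mem_Jid d KinvF (-n).toNat _ fun k => -(k : ℤ)

theorem cartan_current_mem_Jid (a b n : ℤ) :
    π (ghPowF a * psiF n - ghPowF b * phiF n) ∈ Jid 0 d := by
  rw [map_sub, map_mul, map_mul]
  rcases lt_trichotomy n 0 with hn | rfl | hn
  · have hpsi : psiF n = 0 := if_pos hn
    rw [hpsi, map_zero, mul_zero, zero_sub]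
    exact neg_mem ((Jid 0 d).smul_mem _ (phiF_mem_Jid d hn))
  · have hpsi : psiF 0 = KF := rfl
    have hphi : phiF 0 = KinvF := rfl
    rw [hpsi, hphi, ← sub_sub_sub_cancel_right _ _ 1]
    exact sub_mem ((Jid 0 d).mul_sub_one_mem (ghPowF_sub_one_mem_Jid d a) (KU_sub_one_mem_Jid d))
      ((Jid 0 d).mul_sub_one_mem (ghPowF_sub_one_mem_Jid d b) (KinvU_sub_one_mem_Jid d))
  · have hphi : phiF n = 0 := if_pos hn
    rw [hphi, map_zero, mul_zero, sub_zero]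
    exact (Jid 0 d).smul_mem _ (psiF_mem_Jid d hn)

theorem XP_mul_XM_mem_Jid (s m : ℤ) : XP s * XM m ∈ Jid 0 d := by
  have hcomm : XP s * XM m - XM m * XP s = (q - q⁻¹)⁻¹ •
      π (ghPowF (s - m) * psiF (s + m) - ghPowF (m - s) * phiF (s + m)) := by
    have hrel := RingQuot.mkAlgHom_rel F (URel.xpxm s m)
    rwa [map_sub, map_mul, map_mul, map_smul] at hrel
  rw [← sub_add_cancel (XP s * XM m) (XM m * XP s), hcomm]
  exact add_mem (Submodule.smul_of_tower_mem _ _ (cartan_current_mem_Jid d _ _ _))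
    ((Jid 0 d).smul_mem _ (XP_mem_Jid d s))

end HighestWeight

/-- With `h = 0`: for all `s, m ∈ ℤ`, `x⁺(s)·(x⁻(m)·1̄) = 0` in `M̃ = U_q/J`. -/
theorem stmt15 (d s m : ℤ) :
    XP s • (XM m • (Submodule.Quotient.mk 1 : Uq ⧸ Jid 0 d)) = 0 := by
  rw [← Submodule.Quotient.mk_smul, ← Submodule.Quotient.mk_smul, Submodule.Quotient.mk_eq_zero,
    smul_eq_mul, smul_eq_mul, mul_one]
  exact XP_mul_XM_mem_Jid d s m
end
end
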